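/- A unital left-cancellative semigroup P is a right LCM semigroup (i.e., for all p, q ∈ P with pP ∩ qP ≠ ∅ there exists w ∈ P with pP ∩ qP = wP) if and only if its family of constructible ideals equals {pP : p ∈ P} ∪ {∅}. -/
import Mathlib


/-- Image of `Z` under left multiplication by `p`: `pZ = {p*z : z ∈ Z}`. -/
def sgImg {M : Type*} [Monoid M] (p : M) (Z : Set M) : Set M := (p * ·) '' Z

/-- Preimage of `Z` under left multiplication by `p`: `p⁻¹Z = {y : p*y ∈ Z}`. -/
def sgPre {M : Type*} [Monoid M] (p : M) (Z : Set M) : Set M := (p * ·) ⁻¹' Z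

/-- `qₙ⁻¹pₙ ⋯ q₁⁻¹p₁ Z` for `L = [(p₁,q₁), …, (pₙ,qₙ)]`. -/
def sgWordT {M : Type*} [Monoid M] (L : List (M × M)) (Z : Set M) : Set M :=
  L.foldl (fun Z pq => sgPre pq.2 (sgImg pq.1 Z)) Z

/-- The family of constructible right ideals of the unital left-cancellative semigroup `M`,
i.e. the smallest family containing `P = M` and `∅` that is closed under left multiplication,
preimages under left multiplication, and finite intersections. -/
def ConstructibleM {M : Type*} [Monoid M] : Set (Set M) :=
  {S | ∃ L : List (M × M), S = sgWordT L Set.univ} ∪ {∅}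

lemma sgImg_sgImg {M : Type*} [Monoid M] (p w : M) :
    sgImg p (sgImg w Set.univ) = sgImg (p * w) Set.univ := by
  ext x; simp [sgImg, Set.image_image, mul_assoc]

lemma sgPre_one {M : Type*} [Monoid M] (Z : Set M) : sgPre 1 Z = Z := by
  simp [sgPre]

lemma sgPre_principal {M : Type*} [Monoid M] [IsLeftCancelMul M]
    (h : ∀ p q : M, (sgImg p Set.univ ∩ sgImg q Set.univ).Nonempty →
        ∃ w : M, sgImg p Set.univ ∩ sgImg q Set.univ = sgImg w Set.univ) (q a : M) :
    sgPre q (sgImg a Set.univ) = ∅ ∨ ∃ c, sgPre q (sgImg a Set.univ) = sgImg c Set.univ := by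
  by_cases hne : (sgImg q Set.univ ∩ sgImg a Set.univ).Nonempty
  · obtain ⟨w, hw⟩ := h q a hne
    have hwq : w ∈ sgImg q Set.univ := by
      have hww : w ∈ sgImg w Set.univ := ⟨1, trivial, mul_one w⟩
      rw [← hw] at hww; exact hww.1
    obtain ⟨c, -, hc0⟩ := hwq
    have hc : q * c = w := hc0
    right; refine ⟨c, ?_⟩
    ext y; constructor
    · intro hy
      have hmem : q * y ∈ sgImg w Set.univ := by
        rw [← hw]; exact ⟨⟨y, trivial, rfl⟩, hy⟩
      obtain ⟨m, -, hm0⟩ := hmem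
      have hm : w * m = q * y := hm0
      refine ⟨m, trivial, ?_⟩
      have : q * (c * m) = q * y := by rw [← mul_assoc, hc, hm]
      exact mul_left_cancel this
    · rintro ⟨m, -, rfl⟩
      show q * (c * m) ∈ sgImg a Set.univ
      have heq : q * (c * m) = w * m := by rw [← mul_assoc, hc]
      have hmem : w * m ∈ sgImg w Set.univ := ⟨m, trivial, rfl⟩
      rw [← hw] at hmem
      rw [heq]; exact hmem.2
  · left
    ext y
    simp only [Set.mem_empty_iff_false, iff_false]
    intro hy
    exact hne ⟨q * y, ⟨y, trivial, rfl⟩, hy⟩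

lemma word_principal {M : Type*} [Monoid M] [IsLeftCancelMul M]
    (h : ∀ p q : M, (sgImg p Set.univ ∩ sgImg q Set.univ).Nonempty →
        ∃ w : M, sgImg p Set.univ ∩ sgImg q Set.univ = sgImg w Set.univ) :
    ∀ (L : List (M × M)) (Z : Set M),
      (Z = ∅ ∨ ∃ w, Z = sgImg w Set.univ) →
      (sgWordT L Z = ∅ ∨ ∃ w, sgWordT L Z = sgImg w Set.univ)
  | [], Z, hZ => hZ
  | (a :: L), Z, hZ => by
    have step : sgPre a.2 (sgImg a.1 Z) = ∅ ∨
        ∃ w, sgPre a.2 (sgImg a.1 Z) = sgImg w Set.univ := by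
      rcases hZ with rfl | ⟨w, rfl⟩
      · left; simp [sgImg, sgPre]
      · rw [sgImg_sgImg]; exact sgPre_principal h a.2 (a.1 * w)
    exact word_principal h L _ step

/-- A unital left-cancellative semigroup is right LCM iff its constructible ideals are
exactly the principal right ideals together with the empty set. -/
theorem stmt6 {M : Type*} [Monoid M] [IsLeftCancelMul M] :
    (∀ p q : M, (sgImg p Set.univ ∩ sgImg q Set.univ).Nonempty →
        ∃ w : M, sgImg p Set.univ ∩ sgImg q Set.univ = sgImg w Set.univ)
      ↔ ConstructibleM = ({S | ∃ p : M, S = sgImg p Set.univ} ∪ {∅}) := by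
  constructor
  · intro h
    ext S
    constructor
    · rintro (⟨L, rfl⟩ | hS)
      · have huniv : (Set.univ : Set M) = ∅ ∨ ∃ w, (Set.univ : Set M) = sgImg w Set.univ :=
          Or.inr ⟨1, by simp [sgImg]⟩
        rcases word_principal h L Set.univ huniv with h0 | ⟨w, hw⟩
        · exact Or.inr h0
        · exact Or.inl ⟨w, hw⟩
      · exact Or.inr hS
    · rintro (⟨p, rfl⟩ | hS)
      · exact Or.inl ⟨[(p, 1)], by simp [sgWordT, sgPre_one]⟩
      · exact Or.inr hS
  · intro heq p q hne
    have hkey : sgWordT [(q, p), (p, 1)] Set.univ = sgImg p Set.univ ∩ sgImg q Set.univ := by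
      show sgPre 1 (sgImg p (sgPre p (sgImg q Set.univ))) = _
      rw [sgPre_one]
      unfold sgImg sgPre
      rw [Set.image_preimage_eq_inter_range, Set.image_univ, Set.image_univ, Set.inter_comm]
    have hmem : sgImg p Set.univ ∩ sgImg q Set.univ ∈ ConstructibleM :=
      Or.inl ⟨[(q, p), (p, 1)], hkey.symm⟩
    rw [heq] at hmem
    rcases hmem with ⟨w, hw⟩ | h0
    · exact ⟨w, hw⟩
    · rw [Set.mem_singleton_iff] at h0
      rw [h0] at hne
      exact absurd hne Set.not_nonempty_empty
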